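/- arXiv:2212.00391 — 3 statements merged into one kernel-verified Lean document; each statement's English description precedes it below -/
import Mathlib

section
/- Let b, σ > 0, θ > -σ²/2, r, p ∈ ℝ, δ > 0, q ∈ (0,1), and m > 0. Let η = -(1/2 + θ/σ²) + √((1/2 + θ/σ²)² + q m/(δσ²)). Define φ(z) = z^{-η} on (0,∞) and λ = bη - pr/δ. Then for all z > 0, (1/2)σ²z³ φ''(z) + (bz - θz²) φ'(z) + (1/δ)(pr - (q/2) m z) φ(z) = -λ φ(z). -/
/-!
For a power function `z ^ a` the operator `ℒ` only produces the two monomials `z ^ a` and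
`z ^ (a + 1)`: the `z ^ a` coefficient is `b a`, and the `z ^ (a + 1)` coefficient is
`(σ² / 2) a (a - 1) - θ a`. With `a = -η` the potential `-(q / 2δ) m z` cancels the
`z ^ (a + 1)` term exactly when `(σ² / 2) η (η + 1) + θ η = q m / (2δ)`, and `η` is the
positive root of this quadratic. What remains is `(-b η + p r / δ) z ^ (-η) = -λ φ(z)`.
-/

open Real

lemma sq_add_two_mul_eq_of_eq_neg_add_sqrt {A B x : ℝ} (hAB : 0 ≤ A ^ 2 + B)
    (hx : x = -A + √(A ^ 2 + B)) : x ^ 2 + 2 * A * x = B := by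
  have hsq := sq_sqrt hAB
  subst hx
  linear_combination hsq

lemma deriv_deriv_rpow_const (a x : ℝ) :
    deriv (deriv fun y : ℝ => y ^ a) x = a * (a - 1) * x ^ (a - 2) := by
  simp only [deriv_rpow_const', deriv_const_mul_field]
  ring_nf

lemma generator_rpow_const (b σ θ a : ℝ) {z : ℝ} (hz : 0 < z) :
    (1/2)*σ^2*z^3 * deriv (deriv fun y : ℝ => y ^ a) z
        + (b*z - θ*z^2) * deriv (fun y : ℝ => y ^ a) z
      = (b * a + ((1/2)*σ^2 * a * (a - 1) - θ * a) * z) * z ^ a := by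
  have hz2 : z ^ (a - 2) * z ^ 2 = z ^ a := by
    rw [← rpow_natCast, ← rpow_add hz]; norm_num
  have hz1 : z ^ (a - 1) * z = z ^ a := by
    rw [← rpow_add_one hz.ne']; norm_num
  rw [deriv_deriv_rpow_const, Real.deriv_rpow_const]
  linear_combination ((1/2)*σ^2*a*(a-1)*z) * hz2 + (b*a - θ*a*z) * hz1

theorem stmt_1_general (b σ θ r p δ q m : ℝ) (hσ : 0 < σ)
    (hδ : 0 < δ) (hq : q ∈ Set.Ioo (0:ℝ) 1) (hm : 0 < m)
    (η : ℝ) (hη : η = -(1/2 + θ/σ^2) + Real.sqrt ((1/2 + θ/σ^2)^2 + q*m/(δ*σ^2)))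
    (φ : ℝ → ℝ) (hφ : ∀ z : ℝ, φ z = z ^ (-η))
    (lam : ℝ) (hlam : lam = b*η - p*r/δ) :
    ∀ z : ℝ, 0 < z →
      (1/2)*σ^2*z^3 * deriv (deriv φ) z + (b*z - θ*z^2) * deriv φ z
        + (1/δ)*(p*r - (q/2)*m*z) * φ z = -lam * φ z := by
  intro z hz
  obtain rfl : φ = fun y => y ^ (-η) := funext hφ
  have hradicand : 0 ≤ (1/2 + θ/σ^2)^2 + q*m/(δ*σ^2) := by
    have := hq.1
    positivity
  have hroot := sq_add_two_mul_eq_of_eq_neg_add_sqrt hradicand hη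
  have hquadratic : (1/2)*σ^2 * (-η) * (-η - 1) - θ * (-η) = q*m / (2*δ) := by
    field_simp at hroot ⊢
    linear_combination hroot
  rw [generator_rpow_const b σ θ (-η) hz, hquadratic, hlam]
  field_simp
  ring

/-- Hansen–Scheinkman eigenpair `(λ, φ)` with `φ(z) = z^{-η}` for the
3/2 state process model. -/
theorem stmt_1 (b σ θ r p δ q m : ℝ) (hb : 0 < b) (hσ : 0 < σ) (hθ : -σ^2/2 < θ)
    (hδ : 0 < δ) (hq : q ∈ Set.Ioo (0:ℝ) 1) (hm : 0 < m)
    (η : ℝ) (hη : η = -(1/2 + θ/σ^2) + Real.sqrt ((1/2 + θ/σ^2)^2 + q*m/(δ*σ^2)))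
    (φ : ℝ → ℝ) (hφ : ∀ z : ℝ, φ z = z ^ (-η))
    (lam : ℝ) (hlam : lam = b*η - p*r/δ) :
    ∀ z : ℝ, 0 < z →
      (1/2)*σ^2*z^3 * deriv (deriv φ) z + (b*z - θ*z^2) * deriv φ z
        + (1/δ)*(p*r - (q/2)*m*z) * φ z = -lam * φ z :=
  stmt_1_general b σ θ r p δ q m hσ hδ hq hm η hη φ hφ lam hlam
end

section
/- Let b, σ > 0, θ > -σ²/2, r, p ∈ ℝ, δ > 0, q ∈ (0,1), m > 0. Let η = (-(σ²/2 + θ) + √((σ²/2 + θ)² + qσ²m/δ))/σ², ξ = bη/(σ²(η+1) + θ), and λ = -(1/2)σ²ξ² + bξ - pr/δ. Define φ(z) = z^{-η} e^{ξ/z} on (0,∞). Then for all z > 0, (1/2)σ²z⁴ φ''(z) + (bz² - θz³) φ'(z) + (1/δ)(pr - (q/2) m z²) φ(z) = -λ φ(z). -/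
/-!
Write `φ' = φ u` with `u z = -η/z - ξ/z²`, so that `φ'' = φ (u² + u')`. Dividing the equation
by `φ` leaves a polynomial in `z` of degree two: its `z²`-coefficient vanishes because `η` solves
`(σ²/2) η² + (σ²/2 + θ) η = q m / (2δ)`, its `z`-coefficient because
`ξ (σ² (η + 1) + θ) = b η`, and its constant term is `-λ` by the definition of `λ`.
-/

open Real Filter Topology

lemma deriv_deriv_eq_of_hasDerivAt_mul {f u : ℝ → ℝ} {z u' : ℝ}
    (hf : ∀ᶠ w in 𝓝 z, HasDerivAt f (f w * u w) w) (hu : HasDerivAt u u' z) :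
    deriv (deriv f) z = f z * (u z ^ 2 + u') := by
  have hderiv : deriv f =ᶠ[𝓝 z] fun w => f w * u w := hf.mono fun w hw => hw.deriv
  rw [hderiv.deriv_eq, (hf.self_of_nhds.fun_mul hu).deriv]
  ring

lemma hasDerivAt_rpow_neg_mul_exp_div (η ξ : ℝ) {w : ℝ} (hw : w ≠ 0) :
    HasDerivAt (fun x => x ^ (-η) * exp (ξ / x))
      (w ^ (-η) * exp (ξ / w) * (-η / w - ξ / w ^ 2)) w := by
  have hpow : HasDerivAt (fun x : ℝ => x ^ (-η)) (-η * w ^ (-η - 1)) w :=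
    hasDerivAt_rpow_const (Or.inl hw)
  have hdiv : HasDerivAt (fun x : ℝ => ξ / x) (-ξ / w ^ 2) w := by
    simpa [div_eq_mul_inv, mul_comm] using (hasDerivAt_inv hw).const_mul ξ
  refine (hpow.fun_mul hdiv.exp).congr_deriv ?_
  rw [rpow_sub_one hw]
  field_simp
  ring

lemma hasDerivAt_neg_div_sub_div_sq (η ξ : ℝ) {z : ℝ} (hz : z ≠ 0) :
    HasDerivAt (fun w => -η / w - ξ / w ^ 2) (η / z ^ 2 + 2 * ξ / z ^ 3) z := by
  have hinv : HasDerivAt (fun w : ℝ => w⁻¹) (-(z ^ 2)⁻¹) z := hasDerivAt_inv hz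
  have hinv_sq : HasDerivAt (fun w : ℝ => (w ^ 2)⁻¹) (-(2 * z) / (z ^ 2) ^ 2) z := by
    simpa using (hasDerivAt_pow 2 z).fun_inv (pow_ne_zero 2 hz)
  have h := (hinv.const_mul (-η)).fun_sub (hinv_sq.const_mul ξ)
  simp only [← div_eq_mul_inv] at h
  refine h.congr_deriv ?_
  field_simp
  ring

lemma neg_add_sqrt_sq_add_two_mul {A c : ℝ} (h : 0 ≤ A ^ 2 + c) :
    (-A + √(A ^ 2 + c)) ^ 2 + 2 * A * (-A + √(A ^ 2 + c)) = c := by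
  linear_combination sq_sqrt h

lemma eigen_equation_div_phi {σ θ b p r δ q m η ξ z : ℝ} (hδ : δ ≠ 0) (hz : z ≠ 0)
    (hη : σ ^ 2 * η ^ 2 + (σ ^ 2 + 2 * θ) * η = q * m / δ)
    (hξ : ξ * (σ ^ 2 * (η + 1) + θ) = b * η) :
    (1/2) * σ ^ 2 * z ^ 4 * ((-η / z - ξ / z ^ 2) ^ 2 + (η / z ^ 2 + 2 * ξ / z ^ 3))
        + (b * z ^ 2 - θ * z ^ 3) * (-η / z - ξ / z ^ 2)
        + (1 / δ) * (p * r - (q / 2) * m * z ^ 2)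
      = -(-(1/2) * σ ^ 2 * ξ ^ 2 + b * ξ - p * r / δ) := by
  rw [eq_div_iff hδ] at hη
  field_simp
  linear_combination (z ^ 2) * hη + (2 * δ * z) * hξ

theorem stmt_2_general (b σ θ r p δ q m : ℝ) (hσ : 0 < σ)
    (hδ : 0 < δ) (hq : q ∈ Set.Ioo (0:ℝ) 1) (hm : 0 < m)
    (η ξ lam : ℝ)
    (hη : η = (-(σ^2/2 + θ) + Real.sqrt ((σ^2/2 + θ)^2 + q*σ^2*m/δ))/σ^2)
    (hξ : ξ = b*η/(σ^2*(η+1) + θ))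
    (hlam : lam = -(1/2)*σ^2*ξ^2 + b*ξ - p*r/δ)
    (φ : ℝ → ℝ) (hφ : ∀ z : ℝ, φ z = z ^ (-η) * Real.exp (ξ/z)) :
    ∀ z : ℝ, 0 < z →
      (1/2)*σ^2*z^4 * deriv (deriv φ) z + (b*z^2 - θ*z^3) * deriv φ z
        + (1/δ)*(p*r - (q/2)*m*z^2) * φ z = -lam * φ z := by
  intro z hz
  obtain rfl : φ = fun x => x ^ (-η) * exp (ξ / x) := funext hφ
  subst hlam
  have hσ2 : σ ^ 2 ≠ 0 := by positivity
  have hdisc : 0 ≤ (σ^2/2 + θ) ^ 2 + q * σ ^ 2 * m / δ := by have := hq.1; positivity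
  have hση : σ ^ 2 * η = -(σ^2/2 + θ) + √((σ^2/2 + θ) ^ 2 + q * σ ^ 2 * m / δ) := by
    rw [hη]; field_simp
  have hquad : σ ^ 2 * η ^ 2 + (σ ^ 2 + 2 * θ) * η = q * m / δ := by
    have := neg_add_sqrt_sq_add_two_mul hdisc
    rw [← hση] at this
    field_simp at this ⊢
    linear_combination this
  have hden : σ ^ 2 * (η + 1) + θ ≠ 0 := by
    have hden_eq : σ ^ 2 * (η + 1) + θ = √((σ^2/2 + θ) ^ 2 + q * σ ^ 2 * m / δ) + σ ^ 2 / 2 := by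
      linear_combination hση
    rw [hden_eq]
    positivity
  have hlin : ξ * (σ ^ 2 * (η + 1) + θ) = b * η := by rw [hξ]; field_simp
  have hlogderiv : ∀ᶠ w in 𝓝 z, HasDerivAt (fun x => x ^ (-η) * exp (ξ / x))
      (w ^ (-η) * exp (ξ / w) * (-η / w - ξ / w ^ 2)) w :=
    (lt_mem_nhds hz).mono fun w hw => hasDerivAt_rpow_neg_mul_exp_div η ξ hw.ne'
  rw [deriv_deriv_eq_of_hasDerivAt_mul hlogderiv (hasDerivAt_neg_div_sub_div_sq η ξ hz.ne'),
    hlogderiv.self_of_nhds.deriv]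
  linear_combination (z ^ (-η) * exp (ξ / z)) * eigen_equation_div_phi hδ.ne' hz.ne' hquad hlin

/-- Hansen–Scheinkman eigenpair `(λ, φ)` with `φ(z) = z^{-η} e^{ξ/z}`
for the inverse Bessel state process model. -/
theorem stmt_2 (b σ θ r p δ q m : ℝ) (hb : 0 < b) (hσ : 0 < σ) (hθ : -σ^2/2 < θ)
    (hδ : 0 < δ) (hq : q ∈ Set.Ioo (0:ℝ) 1) (hm : 0 < m)
    (η ξ lam : ℝ)
    (hη : η = (-(σ^2/2 + θ) + Real.sqrt ((σ^2/2 + θ)^2 + q*σ^2*m/δ))/σ^2)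
    (hξ : ξ = b*η/(σ^2*(η+1) + θ))
    (hlam : lam = -(1/2)*σ^2*ξ^2 + b*ξ - p*r/δ)
    (φ : ℝ → ℝ) (hφ : ∀ z : ℝ, φ z = z ^ (-η) * Real.exp (ξ/z)) :
    ∀ z : ℝ, 0 < z →
      (1/2)*σ^2*z^4 * deriv (deriv φ) z + (b*z^2 - θ*z^3) * deriv φ z
        + (1/δ)*(p*r - (q/2)*m*z^2) * φ z = -lam * φ z :=
  stmt_2_general b σ θ r p δ q m hσ hδ hq hm η ξ lam hη hξ hlam φ hφ
end

section
/- Let θ ∈ ℝⁿ be a nonzero vector, a ∈ ℝ, q ∈ (0,1), δ > 0, μ ∈ ℝⁿ, and assume a + qθ'μ > 0. Define η = (-(a + qθ'μ) + √((a + qθ'μ)² + (q/δ)‖θ‖²‖μ‖²))/(2‖θ‖²), ξ = 2bη/(a + qθ'μ + 2‖θ‖²η) for b ∈ ℝ, and λ = (η - ξ²/2)‖θ‖² + bξ - pr/δ for p, r ∈ ℝ. Then φ(z) = e^{-ηz² - ξz} satisfies, for all z ∈ ℝ, (1/2)‖θ‖² φ''(z) + (b - (a + qθ'μ)z) φ'(z)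 + (1/δ)(pr - (q/2)‖μ‖²z²) φ(z) = -λ φ(z). -/
/-!
Substituting `φ = exp (-η z² - ξ z)` into the operator turns the equation into the vanishing of
a quadratic polynomial in `z`.  Its `z²`-coefficient vanishes because `2‖θ‖²η` is the positive
root of the Riccati equation `x² + 2(a + qθ'μ) x = (q/δ)‖θ‖²‖μ‖²`, its `z`-coefficient because of
the choice of `ξ`, and the constant term is `-λ` by definition.
-/

open Real

lemma hasDerivAt_exp_quadratic (η ξ z : ℝ) :
    HasDerivAt (fun w => exp (-η * w ^ 2 - ξ * w))
      (-(2 * η * z + ξ) * exp (-η * z ^ 2 - ξ * z)) z := by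
  have hpoly : HasDerivAt (fun w => -η * w ^ 2 - ξ * w) (-(2 * η * z + ξ)) z := by
    refine (((hasDerivAt_pow 2 z).const_mul (-η)).fun_sub
      ((hasDerivAt_id' z).const_mul ξ)).congr_deriv ?_
    norm_num
    ring
  simpa only [mul_comm] using hpoly.exp

lemma deriv_exp_quadratic (η ξ : ℝ) :
    deriv (fun w => exp (-η * w ^ 2 - ξ * w))
      = fun z => -(2 * η * z + ξ) * exp (-η * z ^ 2 - ξ * z) :=
  funext fun z => (hasDerivAt_exp_quadratic η ξ z).deriv

lemma deriv_deriv_exp_quadratic (η ξ z : ℝ) :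
    deriv (deriv fun w => exp (-η * w ^ 2 - ξ * w)) z
      = ((2 * η * z + ξ) ^ 2 - 2 * η) * exp (-η * z ^ 2 - ξ * z) := by
  have hlin : HasDerivAt (fun w => -(2 * η * w + ξ)) (-(2 * η * 1)) z :=
    (((hasDerivAt_id' z).const_mul (2 * η)).add_const ξ).neg
  have hprod : HasDerivAt (fun w => -(2 * η * w + ξ) * exp (-η * w ^ 2 - ξ * w)) _ z :=
    hlin.mul (hasDerivAt_exp_quadratic η ξ z)
  rw [deriv_exp_quadratic, hprod.deriv]
  ring

lemma generator_exp_quadratic_eq (T A b c₀ c₂ η ξ : ℝ)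
    (hriccati : 2 * T * η ^ 2 + 2 * A * η = c₂) (hlinear : ξ * (A + 2 * T * η) = 2 * b * η)
    (z : ℝ) :
    (1 / 2) * T * deriv (deriv fun w => exp (-η * w ^ 2 - ξ * w)) z
        + (b - A * z) * deriv (fun w => exp (-η * w ^ 2 - ξ * w)) z
        + (c₀ - c₂ * z ^ 2) * exp (-η * z ^ 2 - ξ * z)
      = -((η - ξ ^ 2 / 2) * T + b * ξ - c₀) * exp (-η * z ^ 2 - ξ * z) := by
  rw [deriv_deriv_exp_quadratic, deriv_exp_quadratic]
  linear_combination (z ^ 2 * exp (-η * z ^ 2 - ξ * z)) * hriccati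
    + (z * exp (-η * z ^ 2 - ξ * z)) * hlinear

/-- Hansen–Scheinkman eigenpair `(λ, φ)` with `φ(z) = e^{-ηz² - ξz}`
for the filtered Ornstein–Uhlenbeck state process model. -/
theorem stmt_15 {n : ℕ} (θ μ : EuclideanSpace ℝ (Fin n)) (hθ : θ ≠ 0)
    (a q δ b p r : ℝ) (hq : q ∈ Set.Ioo (0:ℝ) 1) (hδ : 0 < δ)
    (hA : 0 < a + q * (inner ℝ θ μ : ℝ))
    (η ξ lam : ℝ)
    (hη : η = (-(a + q*(inner ℝ θ μ : ℝ))
        + Real.sqrt ((a + q*(inner ℝ θ μ : ℝ))^2 + (q/δ)*‖θ‖^2*‖μ‖^2))/(2*‖θ‖^2))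
    (hξ : ξ = 2*b*η/(a + q*(inner ℝ θ μ : ℝ) + 2*‖θ‖^2*η))
    (hlam : lam = (η - ξ^2/2)*‖θ‖^2 + b*ξ - p*r/δ)
    (φ : ℝ → ℝ) (hφ : ∀ z : ℝ, φ z = Real.exp (-η*z^2 - ξ*z)) :
    ∀ z : ℝ,
      (1/2)*‖θ‖^2 * deriv (deriv φ) z + (b - (a + q*(inner ℝ θ μ : ℝ))*z) * deriv φ z
        + (1/δ)*(p*r - (q/2)*‖μ‖^2*z^2) * φ z = -lam * φ z := by
  set A := a + q * (inner ℝ θ μ : ℝ)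
  have hT : ‖θ‖ ^ 2 ≠ 0 := pow_ne_zero 2 (norm_ne_zero_iff.2 hθ)
  have hd : 0 ≤ (q / δ) * ‖θ‖ ^ 2 * ‖μ‖ ^ 2 := by
    have hq₀ := hq.1
    positivity
  have hdisc : 0 < A ^ 2 + (q / δ) * ‖θ‖ ^ 2 * ‖μ‖ ^ 2 := by nlinarith
  have hroot : A + 2 * ‖θ‖ ^ 2 * η = √(A ^ 2 + (q / δ) * ‖θ‖ ^ 2 * ‖μ‖ ^ 2) := by
    rw [hη]
    field_simp
    ring
  have hriccati : 2 * ‖θ‖ ^ 2 * η ^ 2 + 2 * A * η = q * ‖μ‖ ^ 2 / (2 * δ) := by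
    have hsq := congrArg (· ^ 2) hroot
    simp only [sq_sqrt hdisc.le] at hsq
    refine mul_left_cancel₀ (mul_ne_zero two_ne_zero hT) ?_
    linear_combination hsq
  have hlinear : ξ * (A + 2 * ‖θ‖ ^ 2 * η) = 2 * b * η := by
    rw [hξ, div_mul_cancel₀ _ (hroot ▸ (sqrt_pos.2 hdisc).ne')]
  intro z
  rw [show φ = fun w => exp (-η * w ^ 2 - ξ * w) from funext hφ, hlam]
  convert generator_exp_quadratic_eq (‖θ‖ ^ 2) A b (p * r / δ) (q * ‖μ‖ ^ 2 / (2 * δ)) η ξ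
    hriccati hlinear z using 2
  ring
end
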